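/- arXiv:2210.16717 — 6 statements merged into one kernel-verified Lean document; each statement's English description precedes it below -/
import Mathlib

section
/- For every integer k ≥ 4 and any two roots α, β of the k-generalized Fibonacci polynomial f_k with |β| < |α| < 1, the ratio of their absolute values satisfies |α|/|β| > 1 + 1/(10 · k^(9.6) · (π/e)^k). -/
open Polynomial Real

/-- The `k`-generalized Fibonacci polynomial `f_k(X) = X^k - X^(k-1) - ⋯ - X - 1`,
viewed as a polynomial over `ℂ`. -/
noncomputable def fibPoly (k : ℕ) : Polynomial ℂ :=
  X ^ k - ∑ i ∈ Finset.range k, X ^ i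

/-!
Every root of `f_k` satisfies `z ^ k * (2 - z) = 1`, so it lies on the circle `|z| = r` and on
the circle `|2 - z| = r⁻ᵏ`. Two roots `α`, `β` in the same closed half-plane whose moduli are
close therefore lie on nearby pairs of circles, which forces `|α - β|² ≤ 58 k (|α| - |β|)`.
Distinct roots are nevertheless well separated: cancelling `α - β` gives
`β ^ k = (2 - α) ∑ αⁱ β^(k-1-i)`, and the sum is within `k² |α - β|` of `k β^(k-1)`, whose modulus
exceeds that of `β ^ k` by at least `(k - 1) / 3`; hence `|α - β| ≥ 1 / (4k)`. Together these give
`|α| - |β| ≥ 1 / (928 k³)`, far more than the claimed bound. Conjugating `β` if necessary puts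
the two roots in the same half-plane.
-/

open Finset

theorem norm_pow_sub_pow_le_of_norm_le_one {R : Type*} [SeminormedRing R] [NormOneClass R]
    {x y : R} (hx : ‖x‖ ≤ 1) (hy : ‖y‖ ≤ 1) (n : ℕ) : ‖x ^ n - y ^ n‖ ≤ n * ‖x - y‖ := by
  induction n with
  | zero => simp
  | succ n ih =>
    have hyn : ‖y ^ n‖ ≤ 1 := (norm_pow_le y n).trans (pow_le_one₀ (norm_nonneg y) hy)
    calc ‖x ^ (n + 1) - y ^ (n + 1)‖ = ‖x * (x ^ n - y ^ n) + (x - y) * y ^ n‖ := by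
          rw [pow_succ', pow_succ', mul_sub, sub_mul]; abel_nf
      _ ≤ ‖x‖ * ‖x ^ n - y ^ n‖ + ‖x - y‖ * ‖y ^ n‖ :=
          (norm_add_le _ _).trans (add_le_add (norm_mul_le _ _) (norm_mul_le _ _))
      _ ≤ 1 * (n * ‖x - y‖) + ‖x - y‖ * 1 := by gcongr
      _ = (n + 1 : ℕ) * ‖x - y‖ := by push_cast; ring

theorem norm_geom_sum₂_sub_le {R : Type*} [SeminormedRing R] [NormOneClass R]
    {x y : R} (hx : ‖x‖ ≤ 1) (hy : ‖y‖ ≤ 1) (n : ℕ) :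
    ‖∑ i ∈ range n, x ^ i * y ^ (n - 1 - i) - n * y ^ (n - 1)‖ ≤ n ^ 2 * ‖x - y‖ := by
  have hconst : ∑ i ∈ range n, y ^ i * y ^ (n - 1 - i) = n * y ^ (n - 1) := by
    rw [sum_congr rfl fun i hi => by rw [← pow_add, Nat.add_sub_cancel' (by grind)],
      sum_const, card_range, nsmul_eq_mul]
  rw [← hconst, ← sum_sub_distrib]
  calc ‖∑ i ∈ range n, (x ^ i * y ^ (n - 1 - i) - y ^ i * y ^ (n - 1 - i))‖
      ≤ ∑ i ∈ range n, ‖x ^ i - y ^ i‖ * ‖y ^ (n - 1 - i)‖ := by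
        refine (norm_sum_le _ _).trans (sum_le_sum fun i _ => ?_)
        rw [← sub_mul]; exact norm_mul_le _ _
    _ ≤ ∑ i ∈ range n, n * ‖x - y‖ := by
        refine sum_le_sum fun i hi => ?_
        have hin : (i : ℝ) ≤ n := by exact_mod_cast (mem_range.1 hi).le
        calc ‖x ^ i - y ^ i‖ * ‖y ^ (n - 1 - i)‖ ≤ (i * ‖x - y‖) * 1 := by
              gcongr
              · exact norm_pow_sub_pow_le_of_norm_le_one hx hy i
              · exact (norm_pow_le y _).trans (pow_le_one₀ (norm_nonneg y) hy)
          _ ≤ n * ‖x - y‖ := by rw [mul_one]; gcongr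
    _ = n ^ 2 * ‖x - y‖ := by rw [sum_const, card_range, nsmul_eq_mul]; ring

theorem sq_sub_le_abs_sq_sub_sq {x y : ℝ} (h : 0 ≤ x * y) : (x - y) ^ 2 ≤ |x ^ 2 - y ^ 2| := by
  have hle : |x - y| ≤ |x + y| := sq_le_sq.1 (by nlinarith)
  calc (x - y) ^ 2 = |x - y| * |x - y| := by rw [abs_mul_abs_self, sq]
    _ ≤ |x - y| * |x + y| := by gcongr
    _ = |x ^ 2 - y ^ 2| := by rw [← abs_mul]; ring_nf

theorem abs_sq_sub_sq_le_two_mul_abs_sub {a b : ℝ} (ha : |a| ≤ 1) (hb : |b| ≤ 1) :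
    |a ^ 2 - b ^ 2| ≤ 2 * |a - b| := by
  rw [sq_sub_sq, abs_mul]
  gcongr
  linarith [abs_add_le a b]

theorem Complex.four_mul_re_eq (z : ℂ) : 4 * z.re = 4 + ‖z‖ ^ 2 - ‖2 - z‖ ^ 2 := by
  simp only [Complex.sq_norm, Complex.normSq_apply, Complex.sub_re, Complex.sub_im,
    Complex.re_ofNat, Complex.im_ofNat]
  ring

theorem Complex.one_le_norm_two_sub {z : ℂ} (hz : ‖z‖ ≤ 1) : 1 ≤ ‖2 - z‖ := by
  have := norm_sub_norm_le (2 : ℂ) z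
  rw [Complex.norm_two] at this; linarith

theorem Complex.norm_two_sub_le_three {z : ℂ} (hz : ‖z‖ ≤ 1) : ‖2 - z‖ ≤ 3 := by
  have := norm_sub_le (2 : ℂ) z
  rw [Complex.norm_two] at this; linarith

namespace FibPoly

theorem pow_mul_two_sub_eq_one_of_isRoot {k : ℕ} {z : ℂ} (hz : (fibPoly k).IsRoot z) :
    z ^ k * (2 - z) = 1 := by
  simp only [fibPoly, IsRoot, eval_sub, eval_pow, eval_X, eval_finsetSum] at hz
  linear_combination (1 - z) * hz - geom_sum_mul z k

variable {k : ℕ} {z α β : ℂ}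

theorem one_third_le_norm_pow (hz : z ^ k * (2 - z) = 1) (hz1 : ‖z‖ ≤ 1) : 1 / 3 ≤ ‖z‖ ^ k := by
  have h := congrArg norm hz
  rw [norm_mul, norm_pow, norm_one] at h
  nlinarith [Complex.norm_two_sub_le_three hz1, pow_nonneg (norm_nonneg z) k]

theorem abs_norm_two_sub_sub_le (hα : α ^ k * (2 - α) = 1) (hβ : β ^ k * (2 - β) = 1)
    (hα1 : ‖α‖ ≤ 1) (hβ1 : ‖β‖ ≤ 1) :
    |‖2 - α‖ - ‖2 - β‖| ≤ 9 * k * |‖α‖ - ‖β‖| := by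
  have nα := congrArg norm hα
  have nβ := congrArg norm hβ
  rw [norm_mul, norm_pow, norm_one] at nα nβ
  have hpow : |‖β‖ ^ k - ‖α‖ ^ k| ≤ k * |‖β‖ - ‖α‖| := by
    simpa only [Real.norm_eq_abs, abs_norm] using
      norm_pow_sub_pow_le_of_norm_le_one (x := ‖β‖) (y := ‖α‖) (by simpa) (by simpa) k
  calc |‖2 - α‖ - ‖2 - β‖| = ‖2 - α‖ * ‖2 - β‖ * |‖β‖ ^ k - ‖α‖ ^ k| := by
        rw [← abs_of_nonneg (by positivity : 0 ≤ ‖2 - α‖ * ‖2 - β‖), ← abs_mul]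
        congr 1; linear_combination ‖2 - β‖ * nα - ‖2 - α‖ * nβ
    _ ≤ 3 * 3 * (k * |‖β‖ - ‖α‖|) := by
        gcongr
        exacts [Complex.norm_two_sub_le_three hα1, Complex.norm_two_sub_le_three hβ1]
    _ = 9 * k * |‖α‖ - ‖β‖| := by rw [abs_sub_comm]; ring

theorem abs_re_sub_re_le (hk : 1 ≤ k) (hα : α ^ k * (2 - α) = 1) (hβ : β ^ k * (2 - β) = 1)
    (hα1 : ‖α‖ ≤ 1) (hβ1 : ‖β‖ ≤ 1) :
    |α.re - β.re| ≤ 14 * k * |‖α‖ - ‖β‖| := by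
  have hsq : |‖α‖ ^ 2 - ‖β‖ ^ 2| ≤ 2 * |‖α‖ - ‖β‖| :=
    abs_sq_sub_sq_le_two_mul_abs_sub (by rwa [abs_norm]) (by rwa [abs_norm])
  have hsum : |‖2 - α‖ + ‖2 - β‖| ≤ 6 := by
    rw [abs_of_nonneg (by positivity)]
    linarith [Complex.norm_two_sub_le_three hα1, Complex.norm_two_sub_le_three hβ1]
  have hk' : (1 : ℝ) ≤ k := by exact_mod_cast hk
  have hd := abs_nonneg (‖α‖ - ‖β‖)
  calc |α.re - β.re| = |(‖α‖ ^ 2 - ‖β‖ ^ 2) - (‖2 - α‖ - ‖2 - β‖) * (‖2 - α‖ + ‖2 - β‖)| / 4 := by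
        rw [← abs_of_pos (by norm_num : (0 : ℝ) < 4), ← abs_div]
        congr 1; linear_combination (α.four_mul_re_eq - β.four_mul_re_eq) / 4
    _ ≤ (2 * |‖α‖ - ‖β‖| + 9 * k * |‖α‖ - ‖β‖| * 6) / 4 := by
        gcongr
        refine (abs_sub _ _).trans (add_le_add hsq ?_)
        rw [abs_mul]
        exact mul_le_mul (abs_norm_two_sub_sub_le hα hβ hα1 hβ1) hsum (abs_nonneg _) (by positivity)
    _ ≤ 14 * k * |‖α‖ - ‖β‖| := by nlinarith

theorem norm_sub_sq_le (hk : 1 ≤ k) (hα : α ^ k * (2 - α) = 1) (hβ : β ^ k * (2 - β) = 1)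
    (hα1 : ‖α‖ ≤ 1) (hβ1 : ‖β‖ ≤ 1) (him : 0 ≤ α.im * β.im) :
    ‖α - β‖ ^ 2 ≤ 58 * k * |‖α‖ - ‖β‖| := by
  have hre := abs_re_sub_re_le hk hα hβ hα1 hβ1
  have hre_sum : |α.re + β.re| ≤ 2 := by
    linarith [abs_add_le α.re β.re, Complex.abs_re_le_norm α, Complex.abs_re_le_norm β]
  have hsq : |‖α‖ ^ 2 - ‖β‖ ^ 2| ≤ 2 * |‖α‖ - ‖β‖| :=
    abs_sq_sub_sq_le_two_mul_abs_sub (by rwa [abs_norm]) (by rwa [abs_norm])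
  have hre_sq : (α.re - β.re) ^ 2 ≤ 2 * |α.re - β.re| := by
    rw [← sq_abs, sq]
    gcongr
    linarith [abs_sub α.re β.re, Complex.abs_re_le_norm α, Complex.abs_re_le_norm β]
  have him_sq : (α.im - β.im) ^ 2 ≤ 2 * |‖α‖ - ‖β‖| + 2 * |α.re - β.re| := by
    calc (α.im - β.im) ^ 2 ≤ |α.im ^ 2 - β.im ^ 2| := sq_sub_le_abs_sq_sub_sq him
      _ = |(‖α‖ ^ 2 - ‖β‖ ^ 2) - (α.re - β.re) * (α.re + β.re)| := by
          simp only [Complex.sq_norm, Complex.normSq_apply]; ring_nf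
      _ ≤ 2 * |‖α‖ - ‖β‖| + |α.re - β.re| * 2 := by
          refine (abs_sub _ _).trans (add_le_add hsq ?_)
          rw [abs_mul]; gcongr
      _ = 2 * |‖α‖ - ‖β‖| + 2 * |α.re - β.re| := by ring
  have hk' : (1 : ℝ) ≤ k := by exact_mod_cast hk
  have hd := abs_nonneg (‖α‖ - ‖β‖)
  calc ‖α - β‖ ^ 2 = (α.re - β.re) ^ 2 + (α.im - β.im) ^ 2 := by
        rw [Complex.sq_norm, Complex.normSq_apply, Complex.sub_re, Complex.sub_im]; ring
    _ ≤ 2 * |‖α‖ - ‖β‖| + 4 * (14 * k * |‖α‖ - ‖β‖|) := by linarith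
    _ ≤ 58 * k * |‖α‖ - ‖β‖| := by nlinarith

theorem geom_sum₂_mul_two_sub_eq (hα : α ^ k * (2 - α) = 1) (hβ : β ^ k * (2 - β) = 1)
    (hne : α ≠ β) : (∑ i ∈ range k, α ^ i * β ^ (k - 1 - i)) * (2 - α) = β ^ k := by
  refine mul_right_cancel₀ (sub_ne_zero.2 hne) ?_
  linear_combination (2 - α) * geom_sum₂_mul α β k + hα - hβ

theorem one_div_four_mul_le_norm_sub (hk : 4 ≤ k) (hα : α ^ k * (2 - α) = 1)
    (hβ : β ^ k * (2 - β) = 1) (hα1 : ‖α‖ ≤ 1) (hβ1 : ‖β‖ ≤ 1) (hne : α ≠ β) :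
    1 / (4 * k) ≤ ‖α - β‖ := by
  set S := ∑ i ∈ range k, α ^ i * β ^ (k - 1 - i)
  have hk' : (4 : ℝ) ≤ k := by exact_mod_cast hk
  have hS : ‖S‖ ≤ ‖β‖ ^ k := by
    have h := congrArg norm (geom_sum₂_mul_two_sub_eq hα hβ hne)
    rw [norm_mul, norm_pow] at h
    rw [← h]
    exact le_mul_of_one_le_right (norm_nonneg S) (Complex.one_le_norm_two_sub hα1)
  have hlead : k * ‖β‖ ^ k ≤ ‖(k : ℂ) * β ^ (k - 1)‖ := by
    rw [norm_mul, norm_pow, Complex.norm_natCast]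
    exact mul_le_mul_of_nonneg_left
      (pow_le_pow_of_le_one (norm_nonneg β) hβ1 (Nat.sub_le k 1)) (Nat.cast_nonneg k)
  have hlow : ((k : ℝ) - 1) / 3 ≤ k ^ 2 * ‖α - β‖ := by
    calc ((k : ℝ) - 1) / 3 ≤ (k - 1) * ‖β‖ ^ k := by
          rw [div_eq_mul_one_div]
          gcongr
          · linarith
          · exact one_third_le_norm_pow hβ hβ1
      _ ≤ ‖(k : ℂ) * β ^ (k - 1)‖ - ‖S‖ := by linarith
      _ ≤ ‖S - k * β ^ (k - 1)‖ := by rw [norm_sub_rev]; exact norm_sub_norm_le _ _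
      _ ≤ k ^ 2 * ‖α - β‖ := by exact_mod_cast norm_geom_sum₂_sub_le hα1 hβ1 k
  have hkpos : (0 : ℝ) < k ^ 2 := by positivity
  refine le_of_mul_le_mul_left ?_ hkpos
  calc (k : ℝ) ^ 2 * (1 / (4 * k)) = k / 4 := by field_simp
    _ ≤ ((k : ℝ) - 1) / 3 := by linarith
    _ ≤ k ^ 2 * ‖α - β‖ := hlow

theorem one_div_le_norm_sub_norm (hk : 4 ≤ k) (hα : α ^ k * (2 - α) = 1)
    (hβ : β ^ k * (2 - β) = 1) (hlt : ‖β‖ < ‖α‖) (hα1 : ‖α‖ ≤ 1) (him : 0 ≤ α.im * β.im) :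
    1 / (928 * k ^ 3) ≤ ‖α‖ - ‖β‖ := by
  have hβ1 := hlt.le.trans hα1
  have hne : α ≠ β := by rintro rfl; exact lt_irrefl _ hlt
  have hsep := one_div_four_mul_le_norm_sub hk hα hβ hα1 hβ1 hne
  have hclose := norm_sub_sq_le (by omega) hα hβ hα1 hβ1 him
  rw [abs_of_pos (sub_pos.2 hlt)] at hclose
  have hkpos : (0 : ℝ) < k := by positivity
  calc 1 / (928 * (k : ℝ) ^ 3) = (1 / (4 * k)) ^ 2 / (58 * k) := by field_simp; ring
    _ ≤ ‖α - β‖ ^ 2 / (58 * k) := by gcongr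
    _ ≤ ‖α‖ - ‖β‖ := by rw [div_le_iff₀ (by positivity)]; linarith

variable (α) in
theorem exists_root_norm_eq_im_mul_nonneg (hβ : β ^ k * (2 - β) = 1) :
    ∃ γ : ℂ, γ ^ k * (2 - γ) = 1 ∧ ‖γ‖ = ‖β‖ ∧ 0 ≤ α.im * γ.im := by
  by_cases h : 0 ≤ α.im * β.im
  · exact ⟨β, hβ, rfl, h⟩
  · refine ⟨starRingEnd ℂ β, by simpa [Complex.conj_ofNat] using congrArg (starRingEnd ℂ) hβ,
      Complex.norm_conj β, ?_⟩
    rw [Complex.conj_im]; linarith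

end FibPoly

theorem mul_pow_three_lt_ten_mul_rpow_mul_pi_div_exp_pow {x : ℝ} (hx : 4 ≤ x) (n : ℕ) :
    928 * x ^ 3 < 10 * x ^ (9.6 : ℝ) * (π / exp 1) ^ n := by
  have hπe : 1 ≤ π / exp 1 := by
    rw [one_le_div (exp_pos 1)]; linarith [exp_one_lt_d9, pi_gt_d2]
  have h9 : x ^ (9 : ℕ) ≤ x ^ (9.6 : ℝ) := by
    rw [← Real.rpow_natCast]; exact Real.rpow_le_rpow_of_exponent_le (by linarith) (by norm_num)
  have h6 : (4 : ℝ) ^ 6 ≤ x ^ 6 := pow_le_pow_left₀ (by norm_num) hx 6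
  have hx3 : 0 < x ^ 3 := by positivity
  calc 928 * x ^ 3 < 10 * (x ^ 6 * x ^ 3) := by nlinarith
    _ = 10 * x ^ (9 : ℕ) := by ring
    _ ≤ 10 * x ^ (9.6 : ℝ) * 1 := by rw [mul_one]; gcongr
    _ ≤ 10 * x ^ (9.6 : ℝ) * (π / exp 1) ^ n := by gcongr; exact one_le_pow₀ hπe

/-- For every integer `k ≥ 4` and any two roots `α, β` of `f_k` with `|β| < |α| < 1`,
one has `|α|/|β| > 1 + 1/(10 · k^(9.6) · (π/e)^k)`. -/
theorem fibPoly_abs_root_ratio (k : ℕ) (hk : 4 ≤ k) (α β : ℂ)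
    (hα : (fibPoly k).IsRoot α) (hβ : (fibPoly k).IsRoot β)
    (h1 : ‖β‖ < ‖α‖) (h2 : ‖α‖ < 1) :
    ‖α‖ / ‖β‖ >
      1 + 1 / (10 * (k : ℝ) ^ (9.6 : ℝ) * (π / Real.exp 1) ^ k) := by
  have hα' := FibPoly.pow_mul_two_sub_eq_one_of_isRoot hα
  have hβ' := FibPoly.pow_mul_two_sub_eq_one_of_isRoot hβ
  obtain ⟨γ, hγ, hγβ, him⟩ := FibPoly.exists_root_norm_eq_im_mul_nonneg α hβ'
  have hgap : 1 / (928 * (k : ℝ) ^ 3) ≤ ‖α‖ - ‖β‖ :=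
    hγβ ▸ FibPoly.one_div_le_norm_sub_norm hk hα' hγ (hγβ ▸ h1) h2.le him
  have hβ0 : 0 < ‖β‖ :=
    norm_pos_iff.2 (by rintro rfl; simp [zero_pow (by omega : k ≠ 0)] at hβ')
  have hk' : (4 : ℝ) ≤ k := by exact_mod_cast hk
  calc 1 + 1 / (10 * (k : ℝ) ^ (9.6 : ℝ) * (π / Real.exp 1) ^ k) < 1 + 1 / (928 * k ^ 3) := by
        gcongr 1 + 1 / ?_
        exact mul_pow_three_lt_ten_mul_rpow_mul_pi_div_exp_pow hk' k
    _ ≤ 1 + (‖α‖ - ‖β‖) := by linarith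
    _ ≤ ‖α‖ / ‖β‖ := by
        rw [le_div_iff₀ hβ0]
        nlinarith [mul_le_mul_of_nonneg_left (h1.le.trans h2.le) (sub_nonneg.2 h1.le)]
end

section
/- For every integer k ≥ 2 and every root α of the k-generalized Fibonacci polynomial f_k with |α| < 1, one has 1 − (log 3)/k < |α| < 1 − 1/(2^8 · k^3). -/
open Polynomial Real

/-!
Multiplying `f_k(α) = 0` by `α - 1` gives `α^k (2 - α) = 1`, so `|α|^k = 1 / |2 - α| > 1/3`,
whence `|α| > 3^(-1/k) = exp (-log 3 / k) ≥ 1 - log 3 / k`.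

For the upper bound, if `|α| ≥ 1 - ε` then Bernoulli's inequality gives `|2 - α|² ≤ 1 + 3kε`,
and the parallelogram law turns this into `2|α - 1|² ≤ 3kε`: the root is close to `1`.
But `f_k(1) = 1 - k` and `f_k` is `k(k+1)`-Lipschitz on the closed unit disk, so
`k - 1 ≤ k(k+1)|α - 1|`. For `ε = 1/(2^8 k^3)` the two estimates are incompatible.
-/

open Finset

lemma fibPoly_isRoot_iff {k : ℕ} {α : ℂ} :
    (fibPoly k).IsRoot α ↔ α ^ k = ∑ i ∈ range k, α ^ i := by
  simp only [fibPoly, IsRoot, eval_sub, eval_pow, eval_X, eval_finsetSum, sub_eq_zero]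

lemma pow_mul_two_sub_eq_one {R : Type*} [CommRing R] {k : ℕ} {α : R}
    (h : α ^ k = ∑ i ∈ range k, α ^ i) : α ^ k * (2 - α) = 1 := by
  linear_combination (1 - α) * h - geom_sum_mul α k

lemma one_sub_log_div_lt_of_inv_lt_pow {r c : ℝ} {k : ℕ} (hr : 0 ≤ r) (hk : 0 < k)
    (hc : 0 < c) (h : c⁻¹ < r ^ k) : 1 - log c / k < r := by
  have hexp : exp (-(log c / k)) ^ k = c⁻¹ := by
    rw [← exp_nat_mul, mul_neg, mul_div_cancel₀ _ (by positivity), exp_neg, exp_log hc]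
  have hlt : exp (-(log c / k)) < r := lt_of_pow_lt_pow_left₀ k hr (hexp ▸ h)
  linarith [add_one_le_exp (-(log c / k))]

lemma inv_pow_sq_le_of_one_sub_le {r ε : ℝ} {k : ℕ} (hr : 0 ≤ r) (hε : 0 ≤ ε)
    (hεr : 1 - ε ≤ r) (hkε : k * ε ≤ 1 / 8) : (r ^ k)⁻¹ ^ 2 ≤ 1 + 3 * k * ε := by
  have hbern : 1 - k * ε ≤ r ^ k := by
    nlinarith [one_add_mul_sub_le_pow (by linarith : -1 ≤ r) k, k.cast_nonneg (α := ℝ)]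
  have hkε0 : 0 ≤ k * ε := by positivity
  have hsq : (1 - k * ε) ^ 2 ≤ (r ^ k) ^ 2 := pow_le_pow_left₀ (by linarith) hbern 2
  have hcubic : 1 ≤ (1 + 3 * (k * ε)) * (1 - k * ε) ^ 2 := by
    nlinarith [mul_nonneg hkε0 (by linarith : 0 ≤ 1 / 8 - k * ε), pow_nonneg hkε0 3]
  rw [inv_pow, inv_le_iff_one_le_mul₀ (by nlinarith)]
  nlinarith [mul_le_mul_of_nonneg_left hsq (by positivity : (0 : ℝ) ≤ 1 + 3 * (k * ε))]

lemma two_mul_norm_sub_one_sq_le {α : ℂ} (h : ‖α‖ ≤ 1) :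
    2 * ‖α - 1‖ ^ 2 ≤ ‖2 - α‖ ^ 2 - 1 := by
  have hpar := parallelogram_law_with_norm ℝ (1 : ℂ) (1 - α)
  rw [show (1 : ℂ) + (1 - α) = 2 - α by ring, sub_sub_cancel] at hpar
  rw [norm_sub_rev α 1]
  norm_num at hpar
  nlinarith [pow_le_one₀ (norm_nonneg α) h (n := 2)]

lemma norm_pow_sub_one_le {R : Type*} [NormedRing R] [NormOneClass R] {α : R} (h : ‖α‖ ≤ 1)
    (n : ℕ) : ‖α ^ n - 1‖ ≤ n * ‖α - 1‖ := by
  rw [← geom_sum_mul]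
  refine (norm_mul_le _ _).trans (mul_le_mul_of_nonneg_right ?_ (norm_nonneg _))
  calc ‖∑ i ∈ range n, α ^ i‖ ≤ ∑ _i ∈ range n, (1 : ℝ) :=
        norm_sum_le_of_le _ fun i _ => (norm_pow_le α i).trans (pow_le_one₀ (norm_nonneg α) h)
    _ = n := by simp

lemma sub_one_le_mul_norm_sub_one {k : ℕ} {α : ℂ} (hroot : α ^ k = ∑ i ∈ range k, α ^ i)
    (h : ‖α‖ ≤ 1) : (k : ℝ) - 1 ≤ k * (k + 1) * ‖α - 1‖ := by
  have hdecomp : (k : ℂ) - 1 = (α ^ k - 1) - ∑ i ∈ range k, (α ^ i - 1) := by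
    rw [sum_sub_distrib, ← hroot]
    simp
  have hterm : ∀ i ≤ k, ‖α ^ i - 1‖ ≤ k * ‖α - 1‖ := fun i hi =>
    (norm_pow_sub_one_le h i).trans
      (mul_le_mul_of_nonneg_right (by exact_mod_cast hi) (norm_nonneg _))
  calc (k : ℝ) - 1 = ‖(k : ℂ)‖ - ‖(1 : ℂ)‖ := by simp
    _ ≤ ‖(k : ℂ) - 1‖ := norm_sub_norm_le _ _
    _ ≤ ‖α ^ k - 1‖ + ‖∑ i ∈ range k, (α ^ i - 1)‖ := hdecomp ▸ norm_sub_le _ _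
    _ ≤ k * ‖α - 1‖ + ∑ _i ∈ range k, k * ‖α - 1‖ :=
        add_le_add (hterm k le_rfl) (norm_sum_le_of_le _ fun i hi => hterm i (mem_range.1 hi).le)
    _ = k * (k + 1) * ‖α - 1‖ := by simp only [sum_const, card_range, nsmul_eq_mul]; ring

/-- For every integer `k ≥ 2` and every root `α` of `f_k` with `|α| < 1`, one has
`1 − (log 3)/k < |α| < 1 − 1/(2^8 · k^3)`. -/
theorem fibPoly_small_root_abs_bounds (k : ℕ) (hk : 2 ≤ k) (α : ℂ)
    (hα : (fibPoly k).IsRoot α) (h1 : ‖α‖ < 1) :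
    1 - Real.log 3 / k < ‖α‖ ∧
      ‖α‖ < 1 - 1 / (2 ^ 8 * (k : ℝ) ^ 3) := by
  have hroot := fibPoly_isRoot_iff.1 hα
  have hnorm : ‖α‖ ^ k * ‖2 - α‖ = 1 := by
    rw [← norm_pow, ← norm_mul, pow_mul_two_sub_eq_one hroot, norm_one]
  have hk' : (2 : ℝ) ≤ k := by exact_mod_cast hk
  constructor
  · have h3 : ‖2 - α‖ < 3 := (norm_sub_le 2 α).trans_lt (by norm_num; linarith)
    have hpos : 0 < ‖2 - α‖ :=
      (norm_nonneg _).lt_of_ne (right_ne_zero_of_mul_eq_one hnorm).symm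
    refine one_sub_log_div_lt_of_inv_lt_pow (norm_nonneg α) (by omega) three_pos ?_
    rw [eq_inv_of_mul_eq_one_left hnorm]
    exact (inv_lt_inv₀ three_pos hpos).2 h3
  · by_contra! hfar
    set ε : ℝ := 1 / (2 ^ 8 * k ^ 3) with hε
    have hε0 : 0 ≤ ε := by positivity
    have hk3ε : k ^ 3 * ε = 1 / 2 ^ 8 := by rw [hε]; field_simp
    have hkε : k * ε ≤ 1 / 8 := by
      nlinarith [mul_le_mul_of_nonneg_left (by nlinarith : (4 : ℝ) ≤ k ^ 2)
        (by positivity : 0 ≤ k * ε)]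
    have hA : ‖2 - α‖ ^ 2 ≤ 1 + 3 * k * ε := by
      rw [eq_inv_of_mul_eq_one_right hnorm]
      exact inv_pow_sq_le_of_one_sub_le (norm_nonneg α) hε0 hfar hkε
    have hclose := two_mul_norm_sub_one_sq_le h1.le
    have hk_sub_one_sq : ((k : ℝ) - 1) ^ 2 ≤ (k * (k + 1) * ‖α - 1‖) ^ 2 :=
      pow_le_pow_left₀ (by linarith) (sub_one_le_mul_norm_sub_one hroot h1.le) 2
    have hcontra : 2 * ((k : ℝ) - 1) ^ 2 ≤ 3 * (k + 1) ^ 2 * (k ^ 3 * ε) :=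
      calc 2 * ((k : ℝ) - 1) ^ 2 ≤ (k * (k + 1)) ^ 2 * (2 * ‖α - 1‖ ^ 2) := by nlinarith
        _ ≤ (k * (k + 1)) ^ 2 * (3 * k * ε) :=
          mul_le_mul_of_nonneg_left (by linarith) (by positivity)
        _ = 3 * (k + 1) ^ 2 * (k ^ 3 * ε) := by ring
    rw [hk3ε] at hcontra
    nlinarith
end

section
/- For every integer k ≥ 2 and every h ∈ {0, 1, …, k−1}, there exists a root α of the k-generalized Fibonacci polynomial f_k whose argument θ ∈ [0, 2π) (i.e., α = |α|·e^(iθ)) satisfies |θ − 2πh/k| < π/k modulo 2π, that is, there is an integer m with |θ − 2πh/k − 2πm| < π/k. -/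
open Polynomial Real

/-!
Since `(z - 1) f_k(z) = 1 - z^k (2 - z)`, every `z ≠ 1` with `z^k (2 - z) = 1` is a root of `f_k`.
For `h = 0` the real root in `[1, 2]` does. For `0 < h < k`: on `[0, 1]` the function
`r ↦ |z^k (2 - z)|²`, `z = r e^{iθ}`, equals `r^{2k} (4 - 4 r cos θ + r²)`, which increases
strictly from `0` to `5 - 4 cos θ > 1`, so for `θ ∈ (0, 2π)` there is a unique `ρ(θ) ∈ (0, 1)`
with `|z^k (2 - z)| = 1` at `z = ρ(θ) e^{iθ}`, and uniqueness makes `ρ` continuous.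
Along this curve `Re (2 - z) > 0`, so `kθ + arg (2 - z)` is continuous and within `π/2` of `kθ`;
hence it takes the value `2πh` for some `θ` with `|kθ - 2πh| < π`, and there `z^k (2 - z) = 1`.
-/

open Set Filter Topology

theorem sub_one_mul_eval_fibPoly (k : ℕ) (z : ℂ) :
    (z - 1) * (fibPoly k).eval z = 1 - z ^ k * (2 - z) := by
  simp only [fibPoly, eval_sub, eval_pow, eval_X, eval_finsetSum, mul_sub, mul_geom_sum]
  ring

theorem isRoot_fibPoly_of_pow_mul_two_sub_eq_one {k : ℕ} {z : ℂ} (hz : z ≠ 1)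
    (h : z ^ k * (2 - z) = 1) : (fibPoly k).IsRoot z := by
  have := sub_one_mul_eval_fibPoly k z
  rw [h, sub_self, mul_eq_zero] at this
  exact this.resolve_left (sub_ne_zero.2 hz)

theorem exists_one_le_isRoot_fibPoly {k : ℕ} (hk : 0 < k) :
    ∃ t : ℝ, 1 ≤ t ∧ (fibPoly k).IsRoot t := by
  set f : ℝ → ℝ := fun t => t ^ k - ∑ i ∈ Finset.range k, t ^ i
  have hf : ∀ t : ℝ, (fibPoly k).eval (t : ℂ) = f t := by
    simp [f, fibPoly, eval_finsetSum]
  have h1 : f 1 ≤ 0 := by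
    have : (1 : ℝ) ≤ k := by exact_mod_cast hk
    simp only [f, one_pow, Finset.sum_const, Finset.card_range, nsmul_eq_mul, mul_one]
    linarith
  have h2 : 0 ≤ f 2 := by
    norm_num [f, geom_sum_eq (by norm_num : (2 : ℝ) ≠ 1)]
  obtain ⟨t, ht, hft⟩ := intermediate_value_Icc one_le_two (by fun_prop : ContinuousOn f _)
    ⟨h1, h2⟩
  exact ⟨t, ht.1, by rw [IsRoot, hf, hft, Complex.ofReal_zero]⟩

theorem strictMonoOn_pow_mul_quadratic {k : ℕ} (hk : 0 < k) {c : ℝ} (hc : c ≤ 1) :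
    StrictMonoOn (fun r : ℝ => r ^ (2 * k) * (4 - 4 * c * r + r ^ 2)) (Icc 0 1) := by
  rintro s ⟨hs0, hs1⟩ r ⟨hr0, hr1⟩ hsr
  obtain ⟨j, rfl⟩ : ∃ j, k = j + 1 := ⟨k - 1, by omega⟩
  have hq : 0 ≤ 4 - 4 * c * s + s ^ 2 := by nlinarith
  have hψ : s ^ 2 * (4 - 4 * c * s + s ^ 2) < r ^ 2 * (4 - 4 * c * r + r ^ 2) := by
    have hsplit : ∀ x : ℝ,
        x ^ 2 * (4 - 4 * c * x + x ^ 2) = (x * (2 - x)) ^ 2 + 4 * (1 - c) * x ^ 3 :=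
      fun x => by ring
    rw [hsplit, hsplit]
    have hmono : s * (2 - s) < r * (2 - r) := by nlinarith
    have hcube : 4 * (1 - c) * s ^ 3 ≤ 4 * (1 - c) * r ^ 3 := by
      gcongr
    have hsq : (s * (2 - s)) ^ 2 < (r * (2 - r)) ^ 2 := by gcongr; nlinarith
    linarith
  calc s ^ (2 * (j + 1)) * (4 - 4 * c * s + s ^ 2)
      = s ^ (2 * j) * (s ^ 2 * (4 - 4 * c * s + s ^ 2)) := by ring
    _ ≤ r ^ (2 * j) * (s ^ 2 * (4 - 4 * c * s + s ^ 2)) := by gcongr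
    _ < r ^ (2 * j) * (r ^ 2 * (4 - 4 * c * r + r ^ 2)) := by
        gcongr; exact pow_pos (hs0.trans_lt hsr) _
    _ = r ^ (2 * (j + 1)) * (4 - 4 * c * r + r ^ 2) := by ring

theorem norm_sq_pow_mul_two_sub {u : ℂ} (hu : ‖u‖ = 1) (k : ℕ) (r : ℝ) :
    ‖((r : ℂ) * u) ^ k * (2 - r * u)‖ ^ 2 = r ^ (2 * k) * (4 - 4 * u.re * r + r ^ 2) := by
  rw [norm_mul, mul_pow, norm_pow, norm_mul, hu, Complex.norm_real, mul_one, Real.norm_eq_abs,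
    ← pow_mul, mul_comm k 2, pow_mul, sq_abs, ← pow_mul, Complex.sq_norm, Complex.normSq_apply]
  have hu2 : u.re ^ 2 + u.im ^ 2 = 1 := by
    rw [← Complex.normSq_add_mul_I, ← Complex.sq_norm, Complex.re_add_im, hu, one_pow]
  simp only [Complex.sub_re, Complex.sub_im, Complex.mul_re, Complex.mul_im, Complex.ofReal_re,
    Complex.ofReal_im, Complex.re_ofNat, Complex.im_ofNat]
  congr 1
  linear_combination r ^ 2 * hu2

theorem strictMonoOn_norm_pow_mul_two_sub {u : ℂ} (hu : ‖u‖ = 1) {k : ℕ} (hk : 0 < k) :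
    StrictMonoOn (fun r : ℝ => ‖((r : ℂ) * u) ^ k * (2 - r * u)‖) (Icc 0 1) :=
  fun s hs r hr hsr => lt_of_pow_lt_pow_left₀ 2 (norm_nonneg _) <| by
    simpa only [norm_sq_pow_mul_two_sub hu] using
      strictMonoOn_pow_mul_quadratic hk (hu ▸ Complex.re_le_norm u) hs hr hsr

theorem exists_norm_pow_mul_two_sub_eq_one {u : ℂ} (hu : ‖u‖ = 1) (hu1 : u.re < 1) {k : ℕ}
    (hk : 0 < k) : ∃ r ∈ Ioo (0 : ℝ) 1, ‖((r : ℂ) * u) ^ k * (2 - r * u)‖ = 1 := by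
  have h0 : ‖(((0 : ℝ) : ℂ) * u) ^ k * (2 - ((0 : ℝ) : ℂ) * u)‖ = 0 := by simp [hk.ne']
  have h1 : 1 < ‖(((1 : ℝ) : ℂ) * u) ^ k * (2 - ((1 : ℝ) : ℂ) * u)‖ := by
    refine (one_lt_sq_iff₀ (norm_nonneg _)).1 ?_
    rw [norm_sq_pow_mul_two_sub hu, one_pow, one_pow, one_mul, mul_one]
    linarith
  exact intermediate_value_Ioo zero_le_one (by fun_prop) ⟨by rw [h0]; exact zero_lt_one, h1⟩

theorem continuousAt_root_of_strictMonoOn {X : Type*} [TopologicalSpace X] {F : X → ℝ → ℝ}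
    {g : X → ℝ} {x₀ : X} {a b c : ℝ} (hF : ∀ r, ContinuousAt (F · r) x₀)
    (hmono : ∀ x, StrictMonoOn (F x) (Ioo a b))
    (hg : ∀ᶠ x in 𝓝 x₀, g x ∈ Ioo a b ∧ F x (g x) = c) : ContinuousAt g x₀ := by
  obtain ⟨hg₀, hF₀⟩ := hg.self_of_nhds
  refine tendsto_order.2 ⟨fun l hl => ?_, fun u hu => ?_⟩
  · rcases le_or_gt l a with hla | hal
    · exact hg.mono fun x hx => hla.trans_lt hx.1.1
    have hl : l ∈ Ioo a b := ⟨hal, hl.trans hg₀.2⟩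
    have hFl : F x₀ l < c := hF₀ ▸ (hmono x₀).lt_iff_lt hl hg₀ |>.2 ‹l < g x₀›
    filter_upwards [hg, (hF l).eventually_lt_const hFl] with x ⟨hgx, hFx⟩ hlt
    exact ((hmono x).lt_iff_lt hl hgx).1 (hFx ▸ hlt)
  · rcases le_or_gt b u with hbu | hub
    · exact hg.mono fun x hx => hx.1.2.trans_le hbu
    have hu : u ∈ Ioo a b := ⟨hg₀.1.trans hu, hub⟩
    have hFu : c < F x₀ u := hF₀ ▸ (hmono x₀).lt_iff_lt hg₀ hu |>.2 ‹g x₀ < u›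
    filter_upwards [hg, (hF u).eventually_const_lt hFu] with x ⟨hgx, hFx⟩ hlt
    exact ((hmono x).lt_iff_lt hgx hu).1 (hFx ▸ hlt)

theorem exists_continuousAt_norm_pow_mul_two_sub_eq_one {k : ℕ} (hk : 0 < k) :
    ∃ ρ : ℝ → ℝ, ∀ θ ∈ Ioo 0 (2 * π), ContinuousAt ρ θ ∧ ρ θ ∈ Ioo 0 1 ∧
      ‖((ρ θ : ℂ) * Complex.exp (θ * Complex.I)) ^ k *
        (2 - ρ θ * Complex.exp (θ * Complex.I))‖ = 1 := by
  have hroot : ∀ θ ∈ Ioo 0 (2 * π), ∃ r ∈ Ioo (0 : ℝ) 1,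
      ‖((r : ℂ) * Complex.exp (θ * Complex.I)) ^ k *
        (2 - r * Complex.exp (θ * Complex.I))‖ = 1 := by
    rintro θ ⟨hθ0, hθ2π⟩
    refine exists_norm_pow_mul_two_sub_eq_one (Complex.norm_exp_ofReal_mul_I θ) ?_ hk
    rw [Complex.exp_ofReal_mul_I_re]
    refine (cos_le_one θ).lt_of_ne fun h => hθ0.ne' ?_
    exact (cos_eq_one_iff_of_lt_of_lt (by linarith) hθ2π).1 h
  choose! ρ hρ using hroot
  refine ⟨ρ, fun θ hθ => ⟨continuousAt_root_of_strictMonoOn (c := 1) (fun r => by fun_prop)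
    (fun θ => (strictMonoOn_norm_pow_mul_two_sub (Complex.norm_exp_ofReal_mul_I θ) hk).mono
      Ioo_subset_Icc_self) ?_, hρ θ hθ⟩⟩
  filter_upwards [isOpen_Ioo.mem_nhds hθ] using hρ

theorem ofReal_mul_exp_pow_mul (k : ℕ) (r θ : ℝ) (w : ℂ) :
    ((r : ℂ) * Complex.exp (θ * Complex.I)) ^ k * w
      = ((r ^ k * ‖w‖ : ℝ) : ℂ) * Complex.exp ((k * θ + Complex.arg w : ℝ) * Complex.I) := by
  conv_lhs => rw [← Complex.norm_mul_exp_arg_mul_I w]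
  rw [mul_pow, ← Complex.exp_nat_mul]
  push_cast
  rw [add_mul, Complex.exp_add, mul_assoc (k : ℂ)]
  ring

theorem norm_ofReal_mul_exp_mul_I (r θ : ℝ) : ‖(r : ℂ) * Complex.exp (θ * Complex.I)‖ = |r| := by
  rw [norm_mul, Complex.norm_exp_ofReal_mul_I, Complex.norm_real, Real.norm_eq_abs, mul_one]

theorem pow_mul_eq_one_of_norm_eq_one {k : ℕ} {r θ : ℝ} (hr : 0 ≤ r) {w : ℂ} {n : ℤ}
    (hnorm : ‖((r : ℂ) * Complex.exp (θ * Complex.I)) ^ k * w‖ = 1)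
    (harg : k * θ + Complex.arg w = 2 * π * n) :
    ((r : ℂ) * Complex.exp (θ * Complex.I)) ^ k * w = 1 := by
  have hexp : Complex.exp ((2 * π * n : ℝ) * Complex.I) = 1 := by
    rw [← Complex.exp_int_mul_two_pi_mul_I n]
    push_cast
    ring_nf
  rw [ofReal_mul_exp_pow_mul, harg, hexp, mul_one] at hnorm ⊢
  rw [Complex.norm_real, Real.norm_of_nonneg (by positivity)] at hnorm
  rw [hnorm, Complex.ofReal_one]

theorem exists_mul_add_arg_eq {w : ℝ → ℂ} {a b κ c : ℝ} (hab : a ≤ b)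
    (hw : ContinuousOn w (Icc a b)) (hre : ∀ θ ∈ Icc a b, 0 < (w θ).re)
    (ha : κ * a + π / 2 ≤ c) (hb : c ≤ κ * b - π / 2) :
    ∃ θ ∈ Ioo a b, κ * θ + Complex.arg (w θ) = c := by
  have harg : ∀ θ ∈ Icc a b, |Complex.arg (w θ)| < π / 2 := fun θ hθ =>
    Complex.abs_arg_lt_pi_div_two_iff.2 (Or.inl (hre θ hθ))
  have hcont : ContinuousOn (fun θ => κ * θ + Complex.arg (w θ)) (Icc a b) := fun θ hθ =>
    (continuousWithinAt_const.mul continuousWithinAt_id).add <|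
      (Complex.continuousAt_arg (Complex.mem_slitPlane_iff.2 (Or.inl (hre θ hθ))))
        |>.comp_continuousWithinAt (hw θ hθ)
  have hGa := (abs_lt.1 (harg a (left_mem_Icc.2 hab))).2
  have hGb := (abs_lt.1 (harg b (right_mem_Icc.2 hab))).1
  exact intermediate_value_Ioo hab hcont ⟨by linarith, by linarith⟩

theorem exists_pow_mul_two_sub_eq_one {k h : ℕ} (hh0 : 0 < h) (hh : h < k) :
    ∃ θ ∈ Ioo 0 (2 * π), |θ - 2 * π * h / k| < π / k ∧ ∃ r ∈ Ioo (0 : ℝ) 1,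
      ((r : ℂ) * Complex.exp (θ * Complex.I)) ^ k * (2 - r * Complex.exp (θ * Complex.I)) = 1 := by
  obtain ⟨ρ, hρ⟩ := exists_continuousAt_norm_pow_mul_two_sub_eq_one (hh0.trans hh)
  have hk : (0 : ℝ) < k := by exact_mod_cast hh0.trans hh
  have hπk := div_pos pi_pos hk
  set a := 2 * π * h / k - π / k
  set b := 2 * π * h / k + π / k
  have hka : k * a = 2 * π * h - π := by simp only [a]; field_simp
  have hkb : k * b = 2 * π * h + π := by simp only [b]; field_simp
  have hab : Icc a b ⊆ Ioo 0 (2 * π) := by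
    have h1 : (1 : ℝ) ≤ h := by exact_mod_cast hh0
    have h2 : (h : ℝ) + 1 ≤ k := by exact_mod_cast hh
    exact fun θ hθ => ⟨by nlinarith [hθ.1, pi_pos], by nlinarith [hθ.2, pi_pos]⟩
  have hre : ∀ θ ∈ Icc a b, 0 < (2 - ρ θ * Complex.exp (θ * Complex.I)).re := fun θ hθ => by
    obtain ⟨-, ⟨hρ0, hρ1⟩, -⟩ := hρ θ (hab hθ)
    have := Complex.re_le_norm ((ρ θ : ℂ) * Complex.exp (θ * Complex.I))
    rw [norm_ofReal_mul_exp_mul_I, abs_of_pos hρ0] at this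
    rw [Complex.sub_re, Complex.re_ofNat]
    linarith
  have hcont : ContinuousOn (fun θ => 2 - ρ θ * Complex.exp (θ * Complex.I)) (Icc a b) :=
    fun θ hθ => by
      have := (hρ θ (hab hθ)).1
      exact ContinuousAt.continuousWithinAt (by fun_prop)
  obtain ⟨θ, hθ, hGθ⟩ := exists_mul_add_arg_eq (κ := k) (c := 2 * π * h) (by linarith) hcont hre
    (by linarith [pi_pos]) (by linarith [pi_pos])
  obtain ⟨-, hρθ, hnorm⟩ := hρ θ (hab (Ioo_subset_Icc_self hθ))
  refine ⟨θ, hab (Ioo_subset_Icc_self hθ),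
    abs_sub_lt_iff.2 ⟨by linarith [hθ.2], by linarith [hθ.1]⟩, ρ θ, hρθ, pow_mul_eq_one_of_norm_eq_one hρθ.1.le hnorm (n := h) ?_⟩
  exact_mod_cast hGθ

theorem fibPoly_arg_distribution_general (k : ℕ) (h : ℕ) (hh : h < k) :
    ∃ (α : ℂ) (θ : ℝ) (m : ℤ), (fibPoly k).IsRoot α ∧
      0 ≤ θ ∧ θ < 2 * π ∧ α = ((‖α‖ : ℝ) : ℂ) * Complex.exp (θ * Complex.I) ∧
      |θ - 2 * π * h / k - 2 * π * m| < π / k := by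
  have hk : (0 : ℝ) < k := by exact_mod_cast h.zero_le.trans_lt hh
  suffices ∃ (α : ℂ) (θ : ℝ), (fibPoly k).IsRoot α ∧ 0 ≤ θ ∧ θ < 2 * π ∧
      α = ((‖α‖ : ℝ) : ℂ) * Complex.exp (θ * Complex.I) ∧ |θ - 2 * π * h / k| < π / k by
    obtain ⟨α, θ, hα, hθ0, hθ2π, hpolar, hθ⟩ := this
    exact ⟨α, θ, 0, hα, hθ0, hθ2π, hpolar, by simpa using hθ⟩
  rcases h.eq_zero_or_pos with rfl | hh0
  · obtain ⟨t, ht, hroot⟩ := exists_one_le_isRoot_fibPoly hh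
    refine ⟨t, 0, hroot, le_rfl, by positivity, ?_, by simpa using div_pos pi_pos hk⟩
    simp [abs_of_pos (zero_lt_one.trans_le ht)]
  · obtain ⟨θ, ⟨hθ0, hθ2π⟩, hθ, r, ⟨hr0, hr1⟩, hP⟩ := exists_pow_mul_two_sub_eq_one hh0 hh
    have hnorm := norm_ofReal_mul_exp_mul_I r θ
    rw [abs_of_pos hr0] at hnorm
    have hz : (r : ℂ) * Complex.exp (θ * Complex.I) ≠ 1 := fun h1 => by
      rw [h1, norm_one] at hnorm; exact hr1.ne hnorm.symm
    exact ⟨_, θ, isRoot_fibPoly_of_pow_mul_two_sub_eq_one hz hP, hθ0.le, hθ2π, by rw [hnorm], hθ⟩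

/-- For every integer `k ≥ 2` and every `h ∈ {0, 1, …, k−1}`, there exists a root `α`
of `f_k` whose argument `θ ∈ [0, 2π)` (i.e. `α = |α|·e^(iθ)`) satisfies
`|θ − 2πh/k − 2πm| < π/k` for some integer `m`. -/
theorem fibPoly_arg_distribution (k : ℕ) (hk : 2 ≤ k) (h : ℕ) (hh : h < k) :
    ∃ (α : ℂ) (θ : ℝ) (m : ℤ), (fibPoly k).IsRoot α ∧
      0 ≤ θ ∧ θ < 2 * π ∧ α = ((‖α‖ : ℝ) : ℂ) * Complex.exp (θ * Complex.I) ∧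
      |θ - 2 * π * h / k - 2 * π * m| < π / k :=
  fibPoly_arg_distribution_general k h hh
end

section
/- For every integer k ≥ 2, the absolute value of the discriminant of the polynomial g_k(X) = X^(k+1) − 2·X^k + 1 equals 2^(k+1) · k^k − (k+1)^(k+1). -/
/-!
Since `g = X^(k+1) - 2X^k + 1` has `g' = X^(k-1) ((k+1) X - 2k)`, the product of `g'` over the
roots `r` of `g` splits as `(∏ r)^(k-1) · ∏ ((k+1) r - 2k)`. The first factor has modulus
`|g(0)| = 1`; the second is `(-(k+1))^(k+1) g(2k/(k+1)) = ±((k+1)^(k+1) - 2^(k+1) k^k)`, and the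
sign is settled by `(k+1)^(k+1) ≤ 2^(k+1) k^k` for `k ≥ 2`.
-/

open Polynomial

/-- The absolute value of the discriminant of a polynomial over `ℂ`.
For a monic polynomial `p` of degree `n` with roots `r_1, …, r_n` (with multiplicity)
in `ℂ`, one has `|disc p| = ∏ i, |p'(r_i)|`, which we take as the definition. -/
noncomputable def absDisc (p : Polynomial ℂ) : ℝ :=
  (p.roots.map fun r => ‖p.derivative.eval r‖).prod

namespace Polynomial

theorem Splits.eval_eq_prod_roots_sub_of_monic {R : Type*} [CommRing R] [IsDomain R] {p : R[X]}
    (hs : p.Splits) (hm : p.Monic) (x : R) : p.eval x = (p.roots.map (x - ·)).prod := by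
  conv_lhs => rw [hs.eq_prod_roots_of_monic hm]
  simp [eval_multiset_prod, Multiset.map_map]

theorem Splits.prod_roots_mul_sub_of_monic {K : Type*} [Field K] {p : K[X]} (hs : p.Splits)
    (hm : p.Monic) {a : K} (ha : a ≠ 0) (b : K) :
    (p.roots.map (a * · - b)).prod = (-a) ^ p.natDegree * p.eval (b / a) := by
  have hfactor : ∀ r, a * r - b = -a * (b / a - r) := fun r => by field_simp; ring
  simp_rw [hs.eval_eq_prod_roots_sub_of_monic hm, hfactor, Multiset.prod_map_mul,
    Multiset.map_const', Multiset.prod_replicate, hs.natDegree_eq_card_roots]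

end Polynomial

theorem absDisc_eq_norm_prod (p : ℂ[X]) :
    absDisc p = ‖(p.roots.map p.derivative.eval).prod‖ := by
  rw [absDisc, ← normHom_apply, map_multiset_prod, Multiset.map_map]
  rfl

noncomputable def gPoly (R : Type*) [CommRing R] (k : ℕ) : R[X] := X ^ (k + 1) - 2 * X ^ k + 1

section gPoly

variable {R : Type*} [CommRing R] {k : ℕ}

theorem gPoly_monic [Nontrivial R] : (gPoly R k).Monic := by
  unfold gPoly; monicity!

theorem natDegree_gPoly [Nontrivial R] : (gPoly R k).natDegree = k + 1 := by
  unfold gPoly; compute_degree!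

theorem coeff_zero_gPoly (hk : k ≠ 0) : (gPoly R k).coeff 0 = 1 := by
  simp [gPoly, coeff_X_pow, hk.symm]

theorem eval_derivative_gPoly (hk : k ≠ 0) (r : R) :
    (gPoly R k).derivative.eval r = r ^ (k - 1) * ((k + 1) * r - 2 * k) := by
  obtain ⟨j, rfl⟩ := Nat.exists_eq_succ_of_ne_zero hk
  simp [gPoly]
  ring

theorem pow_mul_eval_gPoly {K : Type*} [Field K] (hk : (k : K) + 1 ≠ 0) :
    ((k : K) + 1) ^ (k + 1) * (gPoly K k).eval (2 * k / (k + 1) : K) =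
      (k + 1) ^ (k + 1) - 2 ^ (k + 1) * k ^ k := by
  simp only [gPoly, eval_add, eval_sub, eval_mul, eval_pow, eval_X, eval_one, eval_ofNat, div_pow]
  field_simp
  ring

end gPoly

theorem succ_pow_succ_le_two_pow_succ_mul_pow {k : ℕ} (hk : 2 ≤ k) :
    (k + 1) ^ (k + 1) ≤ 2 ^ (k + 1) * k ^ k := by
  induction k, hk using Nat.le_induction with
  | base => norm_num
  | succ k hk ih =>
    refine Nat.le_of_mul_le_mul_left ?_ (Nat.pow_pos (n := k + 1) (by omega : 0 < k))
    calc k ^ (k + 1) * (k + 2) ^ (k + 2)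
        = (k + 2) * (k * (k + 2)) ^ (k + 1) := by rw [mul_pow]; ring
      _ ≤ (k + 2) * ((k + 1) ^ (k + 1) * (k + 1) ^ (k + 1)) := by
          rw [← mul_pow]; exact Nat.mul_le_mul_left _ (Nat.pow_le_pow_left (by nlinarith) _)
      _ ≤ (2 * k) * ((k + 1) ^ (k + 1) * (2 ^ (k + 1) * k ^ k)) :=
          Nat.mul_le_mul (by omega) (Nat.mul_le_mul_left _ ih)
      _ = k ^ (k + 1) * (2 ^ (k + 2) * (k + 1) ^ (k + 1)) := by ring

/-- For every integer `k ≥ 2`, the absolute value of the discriminant of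
`g_k(X) = X^(k+1) − 2X^k + 1` equals `2^(k+1) · k^k − (k+1)^(k+1)`. -/
theorem absDisc_gPoly (k : ℕ) (hk : 2 ≤ k) :
    absDisc (X ^ (k + 1) - 2 * X ^ k + 1) =
      2 ^ (k + 1) * (k : ℝ) ^ k - ((k : ℝ) + 1) ^ (k + 1) := by
  change absDisc (gPoly ℂ k) = _
  have hk0 : k ≠ 0 := by omega
  have hs := IsAlgClosed.splits (gPoly ℂ k)
  have hroots : ‖(gPoly ℂ k).roots.prod‖ = 1 := by
    have h := hs.coeff_zero_eq_prod_roots_of_monic gPoly_monic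
    rw [coeff_zero_gPoly hk0] at h
    simpa using congrArg (‖·‖) h.symm
  have hk1 : (k : ℂ) + 1 ≠ 0 := by exact_mod_cast k.succ_ne_zero
  have hle : ((k : ℝ) + 1) ^ (k + 1) ≤ 2 ^ (k + 1) * (k : ℝ) ^ k := by
    exact_mod_cast succ_pow_succ_le_two_pow_succ_mul_pow hk
  rw [absDisc_eq_norm_prod, Multiset.map_congr rfl fun r _ => eval_derivative_gPoly hk0 r,
    Multiset.prod_map_mul, Multiset.prod_map_pow, Multiset.map_id',
    hs.prod_roots_mul_sub_of_monic gPoly_monic hk1, natDegree_gPoly, neg_pow, mul_assoc,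
    pow_mul_eval_gPoly hk1]
  simp only [norm_mul, norm_pow, norm_neg, norm_one, one_pow, hroots, one_mul]
  rw [← abs_of_nonneg (sub_nonneg.mpr hle), abs_sub_comm, ← Real.norm_eq_abs, ← Complex.norm_real]
  push_cast
  rfl
end

section
/- For every integer k ≥ 2, the discriminant of the k-generalized Fibonacci polynomial f_k is nonzero; equivalently, f_k has k distinct roots in ℂ. -/
open Polynomial

/-!
Multiplying by `X - 1` turns `f_k` into the trinomial `g = X^(k+1) - 2 X^k + 1`, so it suffices
that `g` has no repeated root. Since `g' = X^(k-1) ((k+1) X - 2k)` and `g(0) = 1`, a repeated root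
would be `r = 2k/(k+1)`; then `g(r) = 0` reads `(k+1)^(k+1) = 2^(k+1) k^k`, impossible because `k^k`
is coprime to `k + 1` and exceeds `1`.
-/

lemma degree_sum_range_X_pow_lt {R : Type*} [Semiring R] (k : ℕ) :
    (∑ i ∈ Finset.range k, (X : R[X]) ^ i).degree < k := by
  refine (degree_sum_le _ _).trans_lt ((Finset.sup_lt_iff (WithBot.bot_lt_coe k)).2 fun i hi => ?_)
  exact (degree_X_pow_le i).trans_lt (Nat.cast_lt.2 (Finset.mem_range.1 hi))

lemma natDegree_fibPoly (k : ℕ) : (fibPoly k).natDegree = k := by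
  refine natDegree_eq_of_degree_eq_some ?_
  rw [fibPoly, degree_sub_eq_left_of_degree_lt, degree_X_pow]
  simpa using degree_sum_range_X_pow_lt k

lemma X_sub_one_mul_fibPoly (k : ℕ) : (X - 1) * fibPoly k = X ^ (k + 1) - 2 * X ^ k + 1 := by
  rw [fibPoly, mul_sub, mul_geom_sum]
  ring

lemma Nat.succ_pow_succ_ne_two_pow_succ_mul_pow {n : ℕ} (hn : 2 ≤ n) :
    (n + 1) ^ (n + 1) ≠ 2 ^ (n + 1) * n ^ n := by
  intro h
  have hcop : Nat.Coprime (n ^ n) ((n + 1) ^ (n + 1)) :=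
    (Nat.coprime_self_add_right.2 (Nat.coprime_one_right n)).pow n (n + 1)
  have hone := hcop.eq_one_of_dvd (h ▸ dvd_mul_left _ _)
  rw [Nat.pow_eq_one] at hone
  omega

lemma eval_derivative_X_pow_succ_sub_two_mul_X_pow_add_one_ne_zero {K : Type*} [Field K]
    [CharZero K] {n : ℕ} (hn : 2 ≤ n) {r : K}
    (hr : eval r (X ^ (n + 1) - 2 * X ^ n + 1 : K[X]) = 0) :
    eval r (derivative (X ^ (n + 1) - 2 * X ^ n + 1 : K[X])) ≠ 0 := by
  intro hr'
  simp only [eval_add, eval_sub, eval_mul, eval_pow, eval_X, eval_one, eval_ofNat, eval_zero,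
    derivative_add, derivative_sub, derivative_mul, derivative_X_pow, derivative_one,
    derivative_ofNat, eval_C, Nat.add_sub_cancel, Nat.cast_add, Nat.cast_one] at hr hr'
  have hr0 : r ≠ 0 := by rintro rfl; simp [show n ≠ 0 by omega] at hr
  have hcrit : ((n : K) + 1) * r = 2 * n := by
    have : r ^ (n - 1) * (((n : K) + 1) * r - 2 * n) = 0 := by
      rw [← pow_sub_one_mul (by omega : n ≠ 0)] at hr'
      linear_combination hr'
    simpa [hr0, sub_eq_zero] using this
  have hpow : 2 * r ^ n = (n : K) + 1 := by
    rw [pow_succ] at hr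
    linear_combination -((n : K) + 1) * hr + r ^ n * hcrit
  have hK : ((n : K) + 1) ^ (n + 1) = 2 ^ (n + 1) * (n : K) ^ n :=
    calc ((n : K) + 1) ^ (n + 1) = 2 * (((n : K) + 1) * r) ^ n := by
          rw [mul_pow, pow_succ, ← hpow]; ring
      _ = 2 ^ (n + 1) * (n : K) ^ n := by rw [hcrit]; ring
  exact Nat.succ_pow_succ_ne_two_pow_succ_mul_pow hn (by exact_mod_cast hK)

lemma separable_of_forall_eval_derivative_ne_zero {K : Type*} [Field K] [IsAlgClosed K]
    {p : K[X]} (h : ∀ r, eval r p = 0 → eval r (derivative p) ≠ 0) : p.Separable := by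
  refine (isCoprime_iff_aeval_ne_zero_of_isAlgClosed K K p _).2 fun r => ?_
  simp only [coe_aeval_eq_eval]
  exact or_iff_not_imp_left.2 fun hr => h r (not_not.1 hr)

lemma separable_fibPoly {k : ℕ} (hk : 2 ≤ k) : (fibPoly k).Separable := by
  refine Separable.of_mul_right (f := X - 1) ?_
  rw [X_sub_one_mul_fibPoly]
  exact separable_of_forall_eval_derivative_ne_zero fun r =>
    eval_derivative_X_pow_succ_sub_two_mul_X_pow_add_one_ne_zero hk

lemma absDisc_ne_zero_of_separable {p : ℂ[X]} (hp : p.Separable) : absDisc p ≠ 0 := by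
  refine Multiset.prod_ne_zero fun h0 => ?_
  obtain ⟨r, hr, hnorm⟩ := Multiset.mem_map.1 h0
  exact hp.eval₂_derivative_ne_zero (RingHom.id ℂ) (isRoot_of_mem_roots hr) (norm_eq_zero.1 hnorm)

/-- For every integer `k ≥ 2`, the discriminant of the `k`-generalized Fibonacci
polynomial `f_k` is nonzero; equivalently, `f_k` has `k` distinct roots in `ℂ`. -/
theorem fibPoly_disc_ne_zero (k : ℕ) (hk : 2 ≤ k) :
    absDisc (fibPoly k) ≠ 0 ∧ (fibPoly k).roots.toFinset.card = k := by
  have hsep := separable_fibPoly hk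
  refine ⟨absDisc_ne_zero_of_separable hsep, ?_⟩
  rw [Multiset.toFinset_card_of_nodup (nodup_roots hsep), IsAlgClosed.card_roots_eq_natDegree,
    natDegree_fibPoly]
end

section
/- Let k ≥ 100 be an integer, let h_k(X) = X^(k+1) − 2X + 1, and let α, β be two distinct roots of the k-generalized Fibonacci polynomial f_k with |α| < 1 and |β| < 1. Then |h_k′(1/α)| · |h_k′(1/β)| > k^2/(2·e^3), where h_k′(X) = (k+1)·X^k − 2 is the derivative of h_k. -/
/- Multiplying `f_k(α) = 0` by `1 - α` gives `α ^ k * (2 - α) = 1`, so `(1 / α) ^ k = 2 - α` and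
`h_k'(1 / α) = 2k - (k + 1) α`. For `‖α‖ < 1` this has norm greater than `k - 1`, and
`(k - 1) ^ 2 > k ^ 2 / 16 > k ^ 2 / (2 e ^ 3)` because `e > 2`. -/

open Polynomial Real

theorem pow_mul_two_sub_eq_one_of_isRoot_fibPoly {k : ℕ} {α : ℂ} (hα : (fibPoly k).IsRoot α) :
    α ^ k * (2 - α) = 1 := by
  have hroot : α ^ k - ∑ i ∈ Finset.range k, α ^ i = 0 := by
    simpa [fibPoly, Polynomial.IsRoot, Polynomial.eval_finsetSum] using hα
  linear_combination (1 - α) * hroot - geom_sum_mul α k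

theorem one_div_pow_eq_two_sub_of_isRoot_fibPoly {k : ℕ} {α : ℂ} (hα : (fibPoly k).IsRoot α) :
    (1 / α) ^ k = 2 - α := by
  rw [one_div_pow, one_div]
  exact inv_eq_of_mul_eq_one_right (pow_mul_two_sub_eq_one_of_isRoot_fibPoly hα)

theorem sub_one_lt_norm_two_mul_sub (k : ℕ) {α : ℂ} (hα : ‖α‖ < 1) :
    (k : ℝ) - 1 < ‖2 * (k : ℂ) - (k + 1) * α‖ := by
  have hk : ‖2 * (k : ℂ)‖ = 2 * k := by simp
  have hkα : ‖((k : ℂ) + 1) * α‖ < k + 1 := by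
    rw [norm_mul, show ((k : ℂ) + 1) = ((k + 1 : ℕ) : ℂ) by push_cast; ring,
      Complex.norm_natCast]
    push_cast
    exact mul_lt_of_lt_one_right (by positivity) hα
  linarith [norm_sub_norm_le (2 * (k : ℂ)) ((k + 1) * α)]

theorem sub_one_lt_norm_derivative_at_inv_of_isRoot_fibPoly {k : ℕ} {α : ℂ}
    (hα : (fibPoly k).IsRoot α) (hα1 : ‖α‖ < 1) :
    (k : ℝ) - 1 < ‖((k : ℂ) + 1) * (1 / α) ^ k - 2‖ := by
  have hval : ((k : ℂ) + 1) * (1 / α) ^ k - 2 = 2 * k - (k + 1) * α := by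
    rw [one_div_pow_eq_two_sub_of_isRoot_fibPoly hα]
    ring
  rw [hval]
  exact sub_one_lt_norm_two_mul_sub k hα1

theorem sq_div_two_mul_exp_one_pow_three_lt {x : ℝ} (hx : 2 ≤ x) :
    x ^ 2 / (2 * exp 1 ^ 3) < (x - 1) * (x - 1) := by
  have he : 2 < exp 1 := by linarith [add_one_lt_exp (one_ne_zero (α := ℝ))]
  have he3 : 2 ^ 3 < exp 1 ^ 3 := pow_lt_pow_left₀ he (by norm_num) (by norm_num)
  rw [div_lt_iff₀ (by positivity)]
  nlinarith

theorem fibPoly_derivative_product_lower_bound_general (k : ℕ) (hk : 100 ≤ k) (α β : ℂ)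
    (hα : (fibPoly k).IsRoot α) (hβ : (fibPoly k).IsRoot β)
    (hα1 : ‖α‖ < 1) (hβ1 : ‖β‖ < 1) :
    ‖((k : ℂ) + 1) * (1 / α) ^ k - 2‖ *
        ‖((k : ℂ) + 1) * (1 / β) ^ k - 2‖ >
      (k : ℝ) ^ 2 / (2 * Real.exp 1 ^ 3) := by
  have hk2 : (2 : ℝ) ≤ k := by exact_mod_cast (by omega : 2 ≤ k)
  have hk1 : (0 : ℝ) ≤ k - 1 := by linarith
  calc (k : ℝ) ^ 2 / (2 * Real.exp 1 ^ 3) < (k - 1) * (k - 1) :=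
        sq_div_two_mul_exp_one_pow_three_lt hk2
    _ < _ := mul_lt_mul'' (sub_one_lt_norm_derivative_at_inv_of_isRoot_fibPoly hα hα1)
        (sub_one_lt_norm_derivative_at_inv_of_isRoot_fibPoly hβ hβ1) hk1 hk1

/-- Let `k ≥ 100` and let `α, β` be two distinct roots of `f_k` with `|α| < 1` and
`|β| < 1`. Then `|h_k′(1/α)| · |h_k′(1/β)| > k²/(2·e³)`, where
`h_k′(X) = (k+1)·X^k − 2` is the derivative of `h_k(X) = X^(k+1) − 2X + 1`. -/
theorem fibPoly_derivative_product_lower_bound (k : ℕ) (hk : 100 ≤ k) (α β : ℂ)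
    (hα : (fibPoly k).IsRoot α) (hβ : (fibPoly k).IsRoot β) (hne : α ≠ β)
    (hα1 : ‖α‖ < 1) (hβ1 : ‖β‖ < 1) :
    ‖((k : ℂ) + 1) * (1 / α) ^ k - 2‖ *
        ‖((k : ℂ) + 1) * (1 / β) ^ k - 2‖ >
      (k : ℝ) ^ 2 / (2 * Real.exp 1 ^ 3) :=
  fibPoly_derivative_product_lower_bound_general k hk α β hα hβ hα1 hβ1
end
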